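/- Let k ≥ 2 and ε > 0. There exists M₀ such that for all M ≥ M₀ the following holds: if f₁, …, f_{k−1} ∈ ℂ[x] are linearly independent over ℂ, G, f_k ∈ ℂ[x] with f₁^M + ⋯ + f_{k−1}^M + G^M·f_k = 0, and D := max(deg f₁, …, deg f_{k−1}, deg(G^M·f_k)/M), then it is not the case that both deg(G) ≥ ε·D and deg(gcd(G, f_j)) < ε·D/(2k) for all j = 1, …, k−1. -/

import Mathlib

/-!
If `f₁ᴹ, …, f_sᴹ` are linearly independent, their Wronskian `W` is a nonzero polynomial, and
since `f_i ^ (M - j)` divides the `j`-th derivative of `f_i ^ M`, we get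
`W = (∏ i, f_i ^ (M + 1 - s)) * P` with `deg P ≤ (s - 1) * ∑ deg f_i`. If moreover
`Aᴹ R = ∑ c_i f_iᴹ` and `c_i ≠ 0`, replacing the `i`-th row of the Wronskian matrix by the
derivatives of `Aᴹ R` multiplies `W` by `c_i` and makes that row divisible by `A ^ (M + 1 - s)`.
Hence `A ^ (M + 1 - s)` divides `f_i ^ (M + 1 - s) * P`, so the part of `A` coprime to `f_i` has
degree at most `(s - 1) * ∑ deg f_i / (M + 1 - s)`.

Applied to a linearly independent subfamily of the `f_iᴹ` that represents `-Gᴹ f_k`, this bounds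
`deg G - deg gcd(G, f_j)` by roughly `k² D / M`, which is incompatible with the hypotheses once
`M ≫ k² / ε`. When `Gᴹ f_k = 0`, a relation `f_jᴹ = ∑ c_i f_iᴹ` with `f_j` of maximal degree is
divided by the gcd of the polynomials involved. Afterwards every root of the left-hand side is a
non-root of some term on the right, and the same bound forces the relation to be between
constants, so two of the `f_i` are proportional.
-/

open Finset Polynomial

theorem exists_linearIndependent_sum_eq {K V ι : Type*} [DivisionRing K] [AddCommGroup V]
    [Module K V] (u : ι → V) (S : Finset ι) {q : V} (hq : q ∈ Submodule.span K (u '' S)) :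
    ∃ T ⊆ S, LinearIndependent K (fun i : T => u i) ∧
      ∃ c : T → K, (∀ i, c i ≠ 0) ∧ ∑ i, c i • u i = q := by
  classical
  induction S using Finset.strongInduction with
  | H S ih =>
    by_cases hmin : ∃ i ∈ S, q ∈ Submodule.span K (u '' ↑(S.erase i))
    · obtain ⟨i, hi, hqi⟩ := hmin
      obtain ⟨T, hT, rest⟩ := ih _ (erase_ssubset hi) hqi
      exact ⟨T, hT.trans (erase_subset _ _), rest⟩
    push Not at hmin
    refine ⟨S, subset_rfl, ?_, ?_⟩
    · rw [linearIndependent_iff_notMem_span]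
      rintro ⟨i, hi⟩ hmem
      refine hmin i hi (Submodule.span_le.2 ?_ hq)
      rintro _ ⟨j, hj, rfl⟩
      by_cases hji : j = i
      · subst hji
        refine Submodule.span_mono ?_ hmem
        rintro _ ⟨⟨k, hk⟩, hk', rfl⟩
        exact ⟨k, mem_erase.2 ⟨fun h => hk'.2 (by simp [h]), hk⟩, rfl⟩
      · exact Submodule.subset_span ⟨j, mem_erase.2 ⟨hji, hj⟩, rfl⟩
    · rw [Set.image_eq_range] at hq
      obtain ⟨c, hc⟩ := (Submodule.mem_span_range_iff_exists_fun K).1 hq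
      refine ⟨c, fun ⟨i, hi⟩ hci => hmin i hi ?_, hc⟩
      rw [← hc]
      refine Submodule.sum_mem _ fun j _ => ?_
      by_cases hji : j = ⟨i, hi⟩
      · simp [hji, hci]
      · exact Submodule.smul_mem _ _ (Submodule.subset_span ⟨j, mem_erase.2
          ⟨fun h => hji (Subtype.ext h), j.2⟩, rfl⟩)

theorem Matrix.prod_dvd_det_of_forall_dvd {n R : Type*} [Fintype n] [DecidableEq n] [CommRing R]
    (N : Matrix n n R) (d : n → R) (h : ∀ i j, d i ∣ N i j) : (∏ i, d i) ∣ N.det := by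
  choose Q hQ using h
  exact ⟨(Matrix.of Q).det, by rw [← det_mul_column]; exact congrArg det (Matrix.ext hQ)⟩

theorem Matrix.natDegree_det_le_of_forall_le {n R : Type*} [Fintype n] [DecidableEq n]
    [CommRing R] (N : Matrix n n R[X]) (b : n → ℕ) (h : ∀ i j, (N i j).natDegree ≤ b i) :
    N.det.natDegree ≤ ∑ i, b i := by
  rw [det_apply']
  refine natDegree_sum_le_of_forall_le _ _ fun σ _ => natDegree_mul_le.trans ?_
  rw [natDegree_intCast, zero_add, ← Equiv.sum_comp σ b]
  exact (natDegree_prod_le _ _).trans (sum_le_sum fun i _ => h (σ i) i)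

theorem sq_mul_lt_mul_sub {k d g m : ℕ} {ε D : ℝ} (hk : 1 ≤ k) (hε : 0 < ε) (hd : ε * D ≤ d)
    (hg : (g : ℝ) < ε * D / (2 * k)) (hm : ⌈2 * (k : ℝ) ^ 2 / ε⌉₊ < m) :
    (k : ℝ) ^ 2 * D < m * ((d - g : ℕ) : ℝ) := by
  have hk' : (1 : ℝ) ≤ k := by exact_mod_cast hk
  have hεD : 0 < ε * D :=
    (div_pos_iff_of_pos_right (by positivity)).1 ((Nat.cast_nonneg g).trans_lt hg)
  have hD : 0 < D := pos_of_mul_pos_right hεD hε.le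
  have hgD : (g : ℝ) < ε * D / 2 :=
    hg.trans_le (div_le_div_of_nonneg_left hεD.le two_pos (by linarith))
  have hx : ε * D / 2 < ((d - g : ℕ) : ℝ) := by
    rw [Nat.cast_sub (by exact_mod_cast (show (g : ℝ) ≤ d by linarith))]
    linarith
  have hm' : 2 * (k : ℝ) ^ 2 / ε < m := (Nat.le_ceil _).trans_lt (by exact_mod_cast hm)
  calc (k : ℝ) ^ 2 * D = 2 * (k : ℝ) ^ 2 / ε * (ε * D / 2) := by field_simp [hε.ne']
    _ < m * ((d - g : ℕ) : ℝ) := mul_lt_mul'' hm' hx (by positivity) (by positivity)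

namespace Polynomial

open Matrix

theorem coeff_prod_sum_of_natDegree_le {R ι : Type*} [CommSemiring R] (s : Finset ι)
    (p : ι → R[X]) (n : ι → ℕ) (h : ∀ i ∈ s, (p i).natDegree ≤ n i) :
    (∏ i ∈ s, p i).coeff (∑ i ∈ s, n i) = ∏ i ∈ s, (p i).coeff (n i) := by
  classical
  induction s using Finset.induction_on with
  | empty => simp
  | insert a s ha ih =>
    have hs : ∀ i ∈ s, (p i).natDegree ≤ n i := fun i hi => h i (mem_insert_of_mem hi)
    rw [prod_insert ha, sum_insert ha, prod_insert ha, coeff_mul_add_eq_of_natDegree_le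
      (h a (mem_insert_self a s)) ((natDegree_prod_le s p).trans (sum_le_sum hs)), ih hs]

section Wronskian

variable {R : Type*} [CommRing R] {s : ℕ}

noncomputable def wronskianMatrix (v : Fin s → R[X]) : Matrix (Fin s) (Fin s) R[X] :=
  .of fun i j => derivative^[j] (v i)

theorem wronskianMatrix_eq_map_C_mul (v w : Fin s → R[X]) (A : Matrix (Fin s) (Fin s) R)
    (h : ∀ i, v i = ∑ j, A i j • w j) : wronskianMatrix v = A.map C * wronskianMatrix w := by
  ext i j
  simp [wronskianMatrix, mul_apply, h, iterate_derivative_sum, smul_eq_C_mul]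

theorem coeff_prod_wronskianMatrix_perm (w : Fin s → R[X]) (σ : Equiv.Perm (Fin s)) :
    (∏ i, wronskianMatrix w (σ i) i).coeff (∑ i, (w i).natDegree - ∑ i : Fin s, (i : ℕ)) =
      ∏ i, (((w (σ i)).natDegree.descFactorial i : R) * (w (σ i)).leadingCoeff) := by
  set d := fun i => (w i).natDegree
  by_cases hσ : ∀ i : Fin s, (i : ℕ) ≤ d (σ i)
  · rw [← Equiv.sum_comp σ d, ← sum_tsub_distrib _ fun i _ => hσ i]
    simp only [wronskianMatrix, of_apply]
    rw [coeff_prod_sum_of_natDegree_le _ _ _ fun i _ => natDegree_iterate_derivative _ _]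
    refine prod_congr rfl fun i _ => ?_
    rw [coeff_iterate_derivative, Nat.sub_add_cancel (hσ i), nsmul_eq_mul]
    rfl
  · push Not at hσ
    obtain ⟨i, hi⟩ := hσ
    rw [prod_eq_zero (mem_univ i) (iterate_derivative_eq_zero hi), coeff_zero,
      prod_eq_zero (mem_univ i)
        (by rw [Nat.descFactorial_eq_zero_iff_lt.2 hi, Nat.cast_zero, zero_mul])]

theorem coeff_det_wronskianMatrix (w : Fin s → R[X]) :
    (wronskianMatrix w).det.coeff (∑ i, (w i).natDegree - ∑ i : Fin s, (i : ℕ)) =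
      (∏ i, (w i).leadingCoeff) *
        (Matrix.of fun i j : Fin s => ((w i).natDegree.descFactorial j : R)).det := by
  rw [← det_mul_column, det_apply', det_apply', finsetSum_coeff]
  refine sum_congr rfl fun σ _ => ?_
  rw [← C_eq_intCast, coeff_C_mul, coeff_prod_wronskianMatrix_perm]
  simp [mul_comm]

theorem exists_det_wronskianMatrix_pow_eq [IsDomain R] {f : Fin s → R[X]} (hf : ∀ i, f i ≠ 0)
    (M : ℕ) :
    ∃ P : R[X], (wronskianMatrix fun i => f i ^ M).det = (∏ i, f i ^ (M + 1 - s)) * P ∧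
      P.natDegree ≤ (s - 1) * ∑ i, (f i).natDegree := by
  have hdvd : ∀ i (j : Fin s), f i ^ (M + 1 - s) ∣ derivative^[j] (f i ^ M) := fun i j =>
    (pow_dvd_pow _ (by omega)).trans (pow_sub_dvd_iterate_derivative_pow _ _ _)
  choose Q hQ using hdvd
  refine ⟨(Matrix.of Q).det, by rw [← det_mul_column]; exact congrArg det (Matrix.ext hQ), ?_⟩
  rw [mul_sum]
  refine natDegree_det_le_of_forall_le _ _ fun i j => ?_
  rcases eq_or_ne (Q i j) 0 with hQ0 | hQ0
  · simp [hQ0]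
  have hdeg := (natDegree_iterate_derivative (f i ^ M) j).trans (Nat.sub_le _ _)
  rw [hQ i j, natDegree_mul (pow_ne_zero _ (hf i)) hQ0, natDegree_pow, natDegree_pow] at hdeg
  have : M * (f i).natDegree ≤ (M + 1 - s) * (f i).natDegree + (s - 1) * (f i).natDegree := by
    rw [← add_mul]
    exact Nat.mul_le_mul_right _ (by omega)
  simp only [of_apply]
  omega

variable {K : Type*} [Field K]

theorem exists_degreeLT_span_insert_eq {v : Fin (s + 1) → K[X]} (hv : LinearIndependent K v)
    {i₀ : Fin (s + 1)} (hi₀ : ∀ i, (v i).natDegree ≤ (v i₀).natDegree) :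
    ∃ u : Fin s → K[X], LinearIndependent K u ∧ (∀ j, u j ∈ degreeLT K (v i₀).natDegree) ∧
      Submodule.span K (insert (v i₀) (Set.range u)) = Submodule.span K (Set.range v) := by
  set d := (v i₀).natDegree
  set c : Fin s → K := fun j => (v (i₀.succAbove j)).coeff d / (v i₀).leadingCoeff
  set u : Fin s → K[X] := fun j => v (i₀.succAbove j) - c j • v i₀
  refine ⟨u, ?_, fun j => ?_, ?_⟩
  · rw [Fintype.linearIndependent_iff] at hv ⊢
    intro a ha j
    have hb := hv (Fin.insertNth i₀ (-∑ j, a j * c j) a) (by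
      rw [Fin.sum_univ_succAbove _ i₀]
      simp only [Fin.insertNth_apply_same, Fin.insertNth_apply_succAbove]
      rw [← ha]
      simp only [u, smul_sub, sum_sub_distrib, neg_smul, sum_smul, smul_smul]
      abel)
    simpa using hb (i₀.succAbove j)
  · rw [mem_degreeLT, degree_lt_iff_coeff_zero]
    intro m hm
    rcases hm.eq_or_lt with rfl | hm
    · simp only [u, c, coeff_sub, coeff_smul, smul_eq_mul]
      rw [show (v i₀).coeff d = (v i₀).leadingCoeff from rfl,
        div_mul_cancel₀ _ (leadingCoeff_ne_zero.2 (hv.ne_zero i₀)), sub_self]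
    · simp [u, coeff_eq_zero_of_natDegree_lt ((hi₀ _).trans_lt hm)]
  · rw [Submodule.span_insert]
    apply le_antisymm
    · refine sup_le ((Submodule.span_singleton_le_iff_mem _ _).2 (Submodule.subset_span ⟨i₀, rfl⟩))
        (Submodule.span_le.2 (Set.range_subset_iff.2 fun j => ?_))
      exact Submodule.sub_mem _ (Submodule.subset_span ⟨_, rfl⟩)
        (Submodule.smul_mem _ _ (Submodule.subset_span ⟨_, rfl⟩))
    · refine Submodule.span_le.2 (Set.range_subset_iff.2 fun i => ?_)
      rcases Fin.eq_self_or_eq_succAbove i₀ i with rfl | ⟨j, rfl⟩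
      · exact Submodule.mem_sup_left (Submodule.mem_span_singleton_self _)
      · rw [show v (i₀.succAbove j) = u j + c j • v i₀ by simp [u]]
        exact add_mem (Submodule.mem_sup_right (Submodule.subset_span ⟨j, rfl⟩))
          (Submodule.mem_sup_left (Submodule.smul_mem _ _ (Submodule.mem_span_singleton_self _)))

theorem exists_span_eq_injective_natDegree {v : Fin s → K[X]} (hv : LinearIndependent K v) :
    ∃ w : Fin s → K[X], (∀ i, w i ≠ 0) ∧ Function.Injective (fun i => (w i).natDegree) ∧
      Submodule.span K (Set.range w) = Submodule.span K (Set.range v) := by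
  induction s with
  | zero => exact ⟨v, finZeroElim, fun i => i.elim0, rfl⟩
  | succ s ih =>
    obtain ⟨i₀, -, hi₀⟩ := exists_max_image univ (fun i => (v i).natDegree) univ_nonempty
    obtain ⟨u, hu, hu_lt, hspan⟩ := exists_degreeLT_span_insert_eq hv fun i => hi₀ i (mem_univ i)
    obtain ⟨w, hw0, hwinj, hwspan⟩ := ih hu
    have hw_lt : ∀ j, (w j).natDegree < (v i₀).natDegree := fun j => by
      have : w j ∈ degreeLT K (v i₀).natDegree := Submodule.span_le.2
        (Set.range_subset_iff.2 hu_lt) (hwspan ▸ Submodule.subset_span (Set.mem_range_self j))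
      rwa [mem_degreeLT, ← natDegree_lt_iff_degree_lt (hw0 j)] at this
    refine ⟨Fin.cons (v i₀) w, Fin.cases (hv.ne_zero i₀) hw0, ?_, ?_⟩
    · have : (fun i => ((Fin.cons (v i₀) w : Fin (s + 1) → K[X]) i).natDegree) =
          Fin.cons (v i₀).natDegree fun j => (w j).natDegree := by
        ext i
        cases i using Fin.cases <;> rfl
      rw [this, Fin.cons_injective_iff]
      exact ⟨fun ⟨j, hj⟩ => (hw_lt j).ne hj, hwinj⟩
    · rw [Fin.range_cons, ← hspan, Submodule.span_insert, Submodule.span_insert, hwspan]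

variable [CharZero K]

theorem det_wronskianMatrix_ne_zero_of_injective {w : Fin s → K[X]} (hw : ∀ i, w i ≠ 0)
    (hd : Function.Injective fun i => (w i).natDegree) : (wronskianMatrix w).det ≠ 0 := by
  intro h
  have hc := coeff_det_wronskianMatrix w
  rw [h, coeff_zero, eq_comm, mul_eq_zero, prod_eq_zero_iff] at hc
  rcases hc with ⟨i, -, hi⟩ | hdet
  · exact hw i (leadingCoeff_eq_zero.1 hi)
  · refine det_vandermonde_ne_zero_iff.2 ((Nat.cast_injective (R := K)).comp hd) ?_
    rw [det_eval_matrixOfPolynomials_eq_det_vandermonde _ (fun j => descPochhammer K j)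
      (fun j => descPochhammer_natDegree K j) (fun j => monic_descPochhammer K j)]
    simpa [descPochhammer_eval_eq_descFactorial] using hdet

theorem det_wronskianMatrix_ne_zero {v : Fin s → K[X]} (hv : LinearIndependent K v) :
    (wronskianMatrix v).det ≠ 0 := by
  obtain ⟨w, hw0, hwinj, hspan⟩ := exists_span_eq_injective_natDegree hv
  choose A hA using fun i => (Submodule.mem_span_range_iff_exists_fun K).1
    (hspan ▸ Submodule.subset_span (Set.mem_range_self i) : v i ∈ Submodule.span K (Set.range w))
  have hAdet : (Matrix.of A).det ≠ 0 := by
    intro h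
    obtain ⟨y, hy0, hy⟩ := exists_vecMul_eq_zero_iff.2 h
    refine hy0 (_root_.funext fun i => Fintype.linearIndependent_iff.1 hv y ?_ i)
    simp only [← hA, smul_sum, smul_smul]
    rw [sum_comm]
    simp only [← sum_smul]
    refine sum_eq_zero fun j _ => ?_
    rw [show ∑ i, y i * A i j = (y ᵥ* Matrix.of A) j from rfl, hy, Pi.zero_apply, zero_smul]
  rw [wronskianMatrix_eq_map_C_mul v w (.of A) fun i => (hA i).symm, det_mul,
    ← RingHom.mapMatrix_apply, ← RingHom.map_det]
  exact mul_ne_zero (C_ne_zero.2 hAdet) (det_wronskianMatrix_ne_zero_of_injective hw0 hwinj)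

theorem exists_pow_dvd_pow_mul_of_eq_sum_pow_fin {f : Fin s → K[X]} {M : ℕ} (hM : M ≠ 0)
    (hf : LinearIndependent K fun i => f i ^ M) :
    ∃ P : K[X], P ≠ 0 ∧ P.natDegree ≤ (s - 1) * ∑ i, (f i).natDegree ∧
      ∀ (A R : K[X]) (c : Fin s → K), A ^ M * R = ∑ i, c i • f i ^ M →
        ∀ i, c i ≠ 0 → A ^ (M + 1 - s) ∣ f i ^ (M + 1 - s) * P := by
  have hf0 : ∀ i, f i ≠ 0 := fun i => ne_zero_pow hM (hf.ne_zero i)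
  obtain ⟨P, hWP, hPdeg⟩ := exists_det_wronskianMatrix_pow_eq hf0 M
  have hW := det_wronskianMatrix_ne_zero hf
  refine ⟨P, fun h => hW (by simp [hWP, h]), hPdeg, fun A R c hrel i hci => ?_⟩
  set e := M + 1 - s
  set W := wronskianMatrix fun i => f i ^ M
  set N := W.updateRow i fun j => derivative^[j] (A ^ M * R)
  have hN : N.det = C (c i) * W.det := by
    have hrow : (fun j : Fin s => derivative^[j] (A ^ M * R)) = ∑ k, C (c k) • W k := by
      ext1 j
      simp [W, wronskianMatrix, hrel, iterate_derivative_sum, smul_eq_C_mul]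
    rw [show N = W.updateRow i (∑ k, C (c k) • W k) by rw [← hrow], det_updateRow_sum,
      smul_eq_mul]
  have hdvd := prod_dvd_det_of_forall_dvd N (Function.update (fun k => f k ^ e) i (A ^ e))
    fun k j => by
      rcases eq_or_ne k i with rfl | hk
      · simpa [N] using (pow_dvd_pow A (by omega)).trans
          (pow_sub_dvd_iterate_derivative_of_pow_dvd j (dvd_mul_right (A ^ M) R))
      · simpa [N, W, wronskianMatrix, hk] using
          (pow_dvd_pow _ (by omega)).trans (pow_sub_dvd_iterate_derivative_pow (f k) M j)
  -- cancel the factors `f k ^ e`, `k ≠ i`, that divide both sides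
  rw [hN, hWP, prod_update_of_mem (mem_univ i), sdiff_singleton_eq_erase,
    ← mul_prod_erase univ _ (mem_univ i),
    show ∀ a b q : K[X], C (c i) * (a * q * b) = q * (C (c i) * (a * b)) by intros; ring,
    mul_comm (A ^ e), mul_dvd_mul_iff_left (prod_ne_zero_iff.2 fun k _ => pow_ne_zero _ (hf0 k))]
    at hdvd
  exact (isUnit_C.2 (Ne.isUnit hci)).dvd_mul_left.1 hdvd

theorem exists_pow_dvd_pow_mul_of_eq_sum_pow {ι : Type*} [Fintype ι] {f : ι → K[X]} {M : ℕ}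
    (hM : M ≠ 0) (hf : LinearIndependent K fun i => f i ^ M) :
    ∃ P : K[X], P ≠ 0 ∧ P.natDegree ≤ (Fintype.card ι - 1) * ∑ i, (f i).natDegree ∧
      ∀ (A R : K[X]) (c : ι → K), A ^ M * R = ∑ i, c i • f i ^ M →
        ∀ i, c i ≠ 0 → A ^ (M + 1 - Fintype.card ι) ∣ f i ^ (M + 1 - Fintype.card ι) * P := by
  set σ := Fintype.equivFin ι
  obtain ⟨P, hP0, hPdeg, hP⟩ := exists_pow_dvd_pow_mul_of_eq_sum_pow_fin (f := f ∘ σ.symm) hM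
    (hf.comp _ σ.symm.injective)
  refine ⟨P, hP0, ?_, fun A R c hrel i hci => ?_⟩
  · simpa only [Function.comp_apply, Equiv.sum_comp σ.symm fun i => (f i).natDegree] using hPdeg
  · simpa using hP A R (c ∘ σ.symm) (by rw [hrel, ← Equiv.sum_comp σ.symm]; rfl) (σ i)
      (by simpa using hci)

end Wronskian

section Divisibility

variable {K : Type*} [Field K]

theorem mul_natDegree_sub_natDegree_gcd_le [DecidableEq K] {A F P : K[X]} {e : ℕ} (hF : F ≠ 0)
    (hP : P ≠ 0) (h : A ^ e ∣ F ^ e * P) :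
    e * (A.natDegree - (EuclideanDomain.gcd A F).natDegree) ≤ P.natDegree := by
  have hd : EuclideanDomain.gcd A F ≠ 0 := fun h => hF (EuclideanDomain.gcd_eq_zero_iff.1 h).2
  have hbezout := EuclideanDomain.gcd_eq_gcd_ab A F
  obtain ⟨a, ha⟩ := EuclideanDomain.gcd_dvd_left A F
  obtain ⟨b, hb⟩ := EuclideanDomain.gcd_dvd_right A F
  generalize EuclideanDomain.gcd A F = d at *
  generalize EuclideanDomain.gcdA A F = u at *
  generalize EuclideanDomain.gcdB A F = v at *
  subst ha hb
  have hab : IsCoprime a b := ⟨u, v, mul_left_cancel₀ hd (by linear_combination -hbezout)⟩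
  rw [mul_pow, mul_pow, mul_assoc, mul_dvd_mul_iff_left (pow_ne_zero _ hd)] at h
  have hdeg := natDegree_le_of_dvd (hab.pow.dvd_of_dvd_mul_left h) hP
  rcases eq_or_ne a 0 with rfl | ha0
  · simp
  rwa [natDegree_mul hd ha0, add_tsub_cancel_left, ← natDegree_pow]

theorem pow_dvd_of_forall_isRoot [IsAlgClosed K] {a P : K[X]} {e : ℕ} (ha : a ≠ 0) (hP : P ≠ 0)
    (h : ∀ x, a.IsRoot x → ∃ b : K[X], ¬ b.IsRoot x ∧ a ^ e ∣ b ^ e * P) : a ^ e ∣ P := by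
  classical
  rw [IsAlgClosed.dvd_iff_roots_le_roots (pow_ne_zero _ ha) hP, Multiset.le_iff_count]
  intro x
  rw [roots_pow, Multiset.count_nsmul]
  by_cases hx : a.IsRoot x
  · obtain ⟨b, hb, hdvd⟩ := h x hx
    have hbP : b ^ e * P ≠ 0 := mul_ne_zero (pow_ne_zero _ (by rintro rfl; exact hb (by simp))) hP
    simpa [roots_mul hbP, roots_pow, count_roots, rootMultiplicity_eq_zero hb] using
      Multiset.count_le_of_le x (roots.le_of_dvd hbP hdvd)
  · rw [count_roots, rootMultiplicity_eq_zero hx, mul_zero]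
    exact Nat.zero_le _

theorem exists_coprime_pow_eq_sum_pow {ι : Type*} {f : ι → K[X]} {M : ℕ} {j : ι} {T : Finset ι}
    (hj : f j ≠ 0) (hT : LinearIndependent K fun i : T => f i ^ M) {c : T → K}
    (hrel : ∑ i, c i • f i ^ M = f j ^ M) :
    ∃ (h : K[X]) (g : ι → K[X]), h ≠ 0 ∧ f j = h * g j ∧ (∀ i : T, f i = h * g i) ∧
      LinearIndependent K (fun i : T => g i ^ M) ∧ ∑ i, c i • g i ^ M = g j ^ M ∧
      ∀ x, (g j).IsRoot x → ∃ i : T, ¬ (g i).IsRoot x := by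
  classical
  obtain ⟨g, hfg, hg1⟩ := extract_gcd f (insert_nonempty j T)
  set h := (insert j T).gcd f
  have hfgj : f j = h * g j := hfg j (mem_insert_self _ _)
  have hfgT : ∀ i : T, f i = h * g i := fun i => hfg i (mem_insert_of_mem i.2)
  have hh : h ≠ 0 := fun h0 => hj (by rw [hfgj, h0, zero_mul])
  refine ⟨h, g, hh, hfgj, hfgT, .of_comp (LinearMap.mulLeft K (h ^ M)) ?_,
    mul_left_cancel₀ (pow_ne_zero M hh) ?_, fun x hx => ?_⟩
  · rw [show ⇑(LinearMap.mulLeft K (h ^ M)) ∘ (fun i : T => g i ^ M) = fun i : T => f i ^ M from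
      _root_.funext fun i => by simp [hfgT, mul_pow]]
    exact hT
  · simp_rw [mul_sum, mul_smul_comm, ← mul_pow, ← hfgT, hrel, hfgj]
  · by_contra! hroot
    refine not_isUnit_X_sub_C x (isUnit_of_dvd_one (hg1 ▸ dvd_gcd fun i hi => ?_))
    rcases mem_insert.1 hi with rfl | hi
    exacts [dvd_iff_isRoot.2 hx, dvd_iff_isRoot.2 (hroot ⟨i, hi⟩)]

end Divisibility

section PowerSums

variable {K ι : Type*} [Field K] [CharZero K] [Fintype ι]

theorem mul_natDegree_sub_natDegree_gcd_le_of_eq_sum_pow [DecidableEq K] {f : ι → K[X]} {M : ℕ}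
    (hM : M ≠ 0) (hf : LinearIndependent K fun i => f i ^ M) {A R : K[X]} {c : ι → K}
    (hrel : A ^ M * R = ∑ i, c i • f i ^ M) {j : ι} (hj : c j ≠ 0) :
    (M + 1 - Fintype.card ι) * (A.natDegree - (EuclideanDomain.gcd A (f j)).natDegree) ≤
      (Fintype.card ι - 1) * ∑ i, (f i).natDegree := by
  obtain ⟨P, hP0, hPdeg, hP⟩ := exists_pow_dvd_pow_mul_of_eq_sum_pow hM hf
  exact (mul_natDegree_sub_natDegree_gcd_le (ne_zero_pow hM (hf.ne_zero j)) hP0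
    (hP A R c hrel j hj)).trans hPdeg

theorem mul_natDegree_le_of_pow_eq_sum_pow [IsAlgClosed K] {f : ι → K[X]} {M : ℕ} (hM : M ≠ 0)
    (hf : LinearIndependent K fun i => f i ^ M) {a : K[X]} (ha : a ≠ 0) {c : ι → K}
    (hc : ∀ i, c i ≠ 0) (hrel : a ^ M = ∑ i, c i • f i ^ M)
    (hcop : ∀ x, a.IsRoot x → ∃ i, ¬ (f i).IsRoot x) :
    (M + 1 - Fintype.card ι) * a.natDegree ≤ (Fintype.card ι - 1) * ∑ i, (f i).natDegree := by
  obtain ⟨P, hP0, hPdeg, hP⟩ := exists_pow_dvd_pow_mul_of_eq_sum_pow hM hf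
  have hdvd : a ^ (M + 1 - Fintype.card ι) ∣ P := pow_dvd_of_forall_isRoot ha hP0 fun x hx => by
    obtain ⟨i, hi⟩ := hcop x hx
    exact ⟨f i, hi, hP a 1 c (by rw [mul_one, hrel]) i (hc i)⟩
  rw [← natDegree_pow]
  exact (natDegree_le_of_dvd hdvd hP0).trans hPdeg

theorem exists_mul_natDegree_sub_natDegree_gcd_le [DecidableEq K] (f : ι → K[X]) {M : ℕ}
    (hM : M ≠ 0) {A R : K[X]} (hAR : A ^ M * R ≠ 0)
    (hspan : A ^ M * R ∈ Submodule.span K (Set.range fun i => f i ^ M)) :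
    ∃ j, (M + 1 - Fintype.card ι) * (A.natDegree - (EuclideanDomain.gcd A (f j)).natDegree) ≤
      (Fintype.card ι - 1) * ∑ i, (f i).natDegree := by
  classical
  rw [← Set.image_univ, ← coe_univ] at hspan
  obtain ⟨T, -, hT, c, hc, hsum⟩ := exists_linearIndependent_sum_eq _ _ hspan
  obtain ⟨j⟩ : Nonempty T := by
    by_contra hT
    rw [not_nonempty_iff] at hT
    exact hAR (by simp [← hsum])
  have hcard : Fintype.card T ≤ Fintype.card ι := by
    rw [Fintype.card_coe]
    exact card_le_univ T
  refine ⟨j, le_trans ?_ ((mul_natDegree_sub_natDegree_gcd_le_of_eq_sum_pow hM hT hsum.symm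
    (hc j)).trans ?_)⟩
  · exact Nat.mul_le_mul_right _ (by omega)
  · rw [sum_coe_sort T fun i => (f i).natDegree]
    exact Nat.mul_le_mul (by omega) (sum_le_sum_of_subset (subset_univ T))

theorem natDegree_eq_zero_of_pow_eq_sum_pow [IsAlgClosed K] {f : ι → K[X]} {M : ℕ}
    (hM : (Fintype.card ι + 1) ^ 2 ≤ M) (hf : LinearIndependent K fun i => f i ^ M) {a : K[X]}
    (ha : a ≠ 0) {c : ι → K} (hc : ∀ i, c i ≠ 0) (hrel : a ^ M = ∑ i, c i • f i ^ M)
    (hcop : ∀ x, a.IsRoot x → ∃ i, ¬ (f i).IsRoot x)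
    (hdeg : ∀ i, (f i).natDegree ≤ a.natDegree) : a.natDegree = 0 := by
  have hbound := mul_natDegree_le_of_pow_eq_sum_pow
    ((by positivity : 0 < (Fintype.card ι + 1) ^ 2).trans_le hM).ne' hf ha hc hrel hcop
  have hsum : ∑ i, (f i).natDegree ≤ Fintype.card ι * a.natDegree := by
    simpa using sum_le_sum fun i (_ : i ∈ univ) => hdeg i
  by_contra hpos
  have := hbound.trans (Nat.mul_le_mul_left _ hsum)
  rw [← mul_assoc] at this
  have hle := Nat.le_of_mul_le_mul_right this (Nat.pos_of_ne_zero hpos)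
  set n := Fintype.card ι
  have h1 : n * n + 2 * n + 1 ≤ M := by nlinarith
  have h2 : (n - 1) * n ≤ n * n := Nat.mul_le_mul_right _ (Nat.sub_le _ _)
  omega

theorem sum_pow_ne_zero [IsAlgClosed K] [Nonempty ι] {f : ι → K[X]} (hf : LinearIndependent K f)
    {M : ℕ} (hM : Fintype.card ι ^ 2 ≤ M) : ∑ i, f i ^ M ≠ 0 := by
  classical
  intro hsum
  obtain ⟨j, -, hj⟩ := exists_max_image univ (fun i => (f i).natDegree) univ_nonempty
  have hspan : f j ^ M ∈ Submodule.span K ((fun i => f i ^ M) '' ↑(univ.erase j)) := by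
    rw [show f j ^ M = -∑ i ∈ univ.erase j, f i ^ M by
      rw [eq_neg_iff_add_eq_zero, add_sum_erase univ (fun i => f i ^ M) (mem_univ j), hsum]]
    exact neg_mem (sum_mem fun i hi => Submodule.subset_span ⟨i, hi, rfl⟩)
  obtain ⟨T, hTj, hT, c, hc, hrel⟩ := exists_linearIndependent_sum_eq _ _ hspan
  have hjT : j ∉ T := fun h => by simpa using hTj h
  obtain ⟨h, g, hh, hfgj, hfgT, hTg, hrelg, hcop⟩ :=
    exists_coprime_pow_eq_sum_pow (hf.ne_zero j) hT hrel
  have hgj : g j ≠ 0 := right_ne_zero_of_mul (hfgj ▸ hf.ne_zero j)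
  have hdeg : ∀ i : T, (g i).natDegree ≤ (g j).natDegree := fun i => by
    have := hj i (mem_univ _)
    rwa [hfgT i, hfgj, natDegree_mul hh (right_ne_zero_of_mul
      (a := h) (hfgT i ▸ hf.ne_zero (i : ι))), natDegree_mul hh hgj, add_le_add_iff_left] at this
  have hcardT : Fintype.card T + 1 ≤ Fintype.card ι := by
    rw [Fintype.card_coe]
    exact card_lt_univ_of_notMem hjT
  have hgj0 := natDegree_eq_zero_of_pow_eq_sum_pow ((Nat.pow_le_pow_left hcardT 2).trans hM) hTg
    hgj hc hrelg.symm hcop hdeg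
  obtain ⟨t⟩ : Nonempty T := by
    by_contra hT
    rw [not_nonempty_iff] at hT
    exact pow_ne_zero M (hf.ne_zero j) (by simp [← hrel])
  refine hf.notMem_span_image (s := {j}) (x := t) (fun h => hjT (h ▸ t.2)) ?_
  have hgjC := eq_C_of_natDegree_eq_zero hgj0
  have hδ : (g j).coeff 0 ≠ 0 := fun h0 => hgj (by rw [hgjC, h0, C_0])
  have hgtC := eq_C_of_natDegree_eq_zero (p := g t) (by have := hdeg t; omega)
  rw [Set.image_singleton, Submodule.mem_span_singleton, hfgT, hfgj, hgjC, hgtC]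
  exact ⟨(g t).coeff 0 / (g j).coeff 0, by
    rw [smul_eq_C_mul, mul_left_comm, ← C_mul, div_mul_cancel₀ _ hδ]⟩

end PowerSums

end Polynomial

/-- For `k ≥ 2` and `ε > 0` there is `M₀` such that for `M ≥ M₀`: if
`f 1, …, f (k-1) ∈ ℂ[x]` are linearly independent over ℂ and
`f 1 ^ M + ⋯ + f (k-1) ^ M + G ^ M · f_k = 0`, then with
`D := max(deg f 1, …, deg f (k-1), deg(G^M·f_k)/M)` we cannot have both
`deg G ≥ ε·D` and `deg(gcd(G, f j)) < ε·D/(2k)` for all `j`. -/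
theorem no_large_coprime_power_factor (k : ℕ) (hk : 2 ≤ k) (ε : ℝ) (hε : 0 < ε) :
    ∃ M₀ : ℕ, ∀ M : ℕ, M₀ ≤ M →
      ∀ (f : Fin (k - 1) → ℂ[X]) (G fk : ℂ[X]),
        LinearIndependent ℂ f →
        (∑ i, f i ^ M) + G ^ M * fk = 0 →
        ∀ D : ℝ,
          D = max (↑(Finset.univ.sup fun i => (f i).natDegree))
                (((G ^ M * fk).natDegree : ℝ) / M) →
        ¬ (ε * D ≤ (G.natDegree : ℝ) ∧
            ∀ j, ((EuclideanDomain.gcd G (f j)).natDegree : ℝ) < ε * D / (2 * k)) := by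
  refine ⟨k ^ 2 + ⌈2 * k ^ 2 / ε⌉₊, fun M hM f G fk hf hsum D hD ⟨hGdeg, hgcd⟩ => ?_⟩
  have hcard : Fintype.card (Fin (k - 1)) = k - 1 := Fintype.card_fin _
  have hk2 : k - 1 ≤ k ^ 2 := (Nat.sub_le k 1).trans (Nat.le_self_pow two_ne_zero k)
  have : Nonempty (Fin (k - 1)) := ⟨⟨0, by omega⟩⟩
  have hGfk : G ^ M * fk ≠ 0 := fun h0 => sum_pow_ne_zero hf (M := M)
    (by rw [hcard]; exact (Nat.pow_le_pow_left (Nat.sub_le k 1) 2).trans (by omega))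
    (by simpa [h0] using hsum)
  obtain ⟨j, hj⟩ := exists_mul_natDegree_sub_natDegree_gcd_le f (by nlinarith) hGfk (by
    rw [eq_neg_of_add_eq_zero_right hsum, ← sum_neg_distrib]
    exact Submodule.sum_mem _ fun i _ => Submodule.neg_mem _ (Submodule.subset_span ⟨i, rfl⟩))
  set B := univ.sup fun i => (f i).natDegree
  have hfB : ∑ i, (f i).natDegree ≤ (k - 1) * B := by
    simpa using sum_le_card_nsmul univ _ B fun i _ =>
      le_sup (f := fun i => (f i).natDegree) (mem_univ i)
  have hnat : (M + 1 - (k - 1)) * (G.natDegree - (EuclideanDomain.gcd G (f j)).natDegree) ≤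
      k ^ 2 * B := by
    refine (hcard ▸ hj).trans ((Nat.mul_le_mul_left _ hfB).trans ?_)
    rw [← mul_assoc, sq]
    exact Nat.mul_le_mul_right _ (Nat.mul_le_mul (by omega) (by omega))
  have hlt := sq_mul_lt_mul_sub (by omega) hε hGdeg (hgcd j) (m := M + 1 - (k - 1)) (by omega)
  have hBD : (B : ℝ) ≤ D := hD ▸ le_max_left _ _
  have hnat' : ((M + 1 - (k - 1) : ℕ) : ℝ) *
      ((G.natDegree - (EuclideanDomain.gcd G (f j)).natDegree : ℕ) : ℝ) ≤ k ^ 2 * B := by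
    exact_mod_cast hnat
  nlinarith
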